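/- arXiv:math-ph/0304019 — 4 statements merged into one kernel-verified Lean document; each statement's English description precedes it below -/
import Mathlib

section
/- Let u ∈ C_c^∞([0,∞)) be as above and, for x,y,z ∈ ℝ³, let R_2 = {(y,z) : |z| > R/2, |y−z| > R/4}. Then for every ε > 0 there exists c (independent of ε, R, φ) such that ∫∫_{R_2} |φ(y)||φ(z)| / |y−z|⁴ · |u(|y|/R) − u(|z|/R)|² dy dz ≤ c ( ε ‖φ‖²/R + (1/(εR)) ‖φ·χ(|z|>R/2)‖² ). -/
open MeasureTheory Real
open scoped ENNReal

noncomputable section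

abbrev E3 := EuclideanSpace ℝ (Fin 3)

lemma K1_meas : Measurable (fun v : E3 => if 1/4 < ‖v‖ then (‖v‖^4)⁻¹ else 0) := by
  refine Measurable.ite ?_ (by fun_prop) measurable_const
  exact measurableSet_lt measurable_const measurable_norm

lemma K1_nonneg (v : E3) : 0 ≤ (if 1/4 < ‖v‖ then (‖v‖^4)⁻¹ else 0) := by
  split <;> positivity

lemma K1_integrable : Integrable (fun v : E3 => if 1/4 < ‖v‖ then (‖v‖^4)⁻¹ else 0) := by
  have hdim : (Module.finrank ℝ E3 : ℝ) < 4 := by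
    simp [finrank_euclideanSpace_fin]; norm_num
  have hJ : Integrable (fun v : E3 => (1 + ‖v‖) ^ (-(4:ℝ))) :=
    integrable_one_add_norm hdim
  refine ((hJ.const_mul 625).mono' (K1_meas.aestronglyMeasurable) ?_)
  filter_upwards with v
  rw [Real.norm_eq_abs, abs_of_nonneg (K1_nonneg v)]
  split
  · rename_i h
    have hv : 0 < ‖v‖ := lt_trans (by norm_num) h
    have h5 : 1 + ‖v‖ ≤ 5 * ‖v‖ := by nlinarith
    have hp : (1 + ‖v‖) ^ (-(4:ℝ)) = ((1+‖v‖)^4)⁻¹ := by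
      rw [Real.rpow_neg (by positivity)]
      rw [show ((4:ℝ)) = ((4:ℕ):ℝ) by norm_num, Real.rpow_natCast]
    rw [hp]
    have key : ((1+‖v‖)^4) ≤ 625 * ‖v‖^4 := by
      have := pow_le_pow_left₀ (by positivity : (0:ℝ) ≤ 1 + ‖v‖) h5 4
      nlinarith [this]
    rw [← div_eq_mul_inv, le_div_iff₀ (by positivity), inv_mul_le_iff₀ (by positivity)]
    linarith
  · positivity

set_option maxHeartbeats 1000000 in
theorem region_two_estimate
    (u : ℝ → ℝ) (hu_smooth : ContDiff ℝ (⊤ : ℕ∞) u) (hu_supp : HasCompactSupport u)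
    (hu_one : ∀ x ∈ Set.Icc (0 : ℝ) (1 / 2), u x = 1)
    (hu_zero : ∀ x : ℝ, 1 ≤ x → u x = 0)
    (hu_range : ∀ x, 0 ≤ u x ∧ u x ≤ 1) :
    ∃ c : ℝ, ∀ ε > (0 : ℝ), ∀ R > (0 : ℝ), ∀ φ : E3 → ℂ, MemLp φ 2 →
      ∫ p in {p : E3 × E3 | R / 2 < ‖p.2‖ ∧ R / 4 < ‖p.1 - p.2‖},
          ‖φ p.1‖ * ‖φ p.2‖ / ‖p.1 - p.2‖ ^ 4 * (u (‖p.1‖ / R) - u (‖p.2‖ / R)) ^ 2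
      ≤ c * (ε * (∫ y : E3, ‖φ y‖ ^ 2) / R
          + (1 / (ε * R)) * ∫ z in {z : E3 | R / 2 < ‖z‖}, ‖φ z‖ ^ 2) := by
  set C₀ : ℝ := ∫ v : E3, (if 1/4 < ‖v‖ then (‖v‖^4)⁻¹ else 0) with hC₀
  have hC₀nn : 0 ≤ C₀ := integral_nonneg K1_nonneg
  refine ⟨C₀ / 2, ?_⟩
  intro ε hε R hR φ hφ
  set K : E3 → ℝ := fun w => if R/4 < ‖w‖ then (‖w‖^4)⁻¹ else 0 with hK
  have hKnn : ∀ w, 0 ≤ K w := fun w => by simp only [hK]; split <;> positivity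
  have hKcomp : (fun v : E3 => K (R • v)) = fun v => (R^4)⁻¹ * (if 1/4 < ‖v‖ then (‖v‖^4)⁻¹ else 0) := by
    funext v
    have hn : ‖R • v‖ = R * ‖v‖ := by
      rw [norm_smul, Real.norm_eq_abs, abs_of_pos hR]
    rw [hK]
    simp only [hn]
    have hcond : (R/4 < R * ‖v‖) ↔ (1/4 < ‖v‖) := by
      rw [div_lt_iff₀ (by norm_num)]
      constructor <;> intro h
      · rw [div_lt_iff₀ (by norm_num)]
        nlinarith
      · nlinarith [(div_lt_iff₀ (by norm_num : (0:ℝ) < 4)).1 h]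
    rw [if_congr hcond rfl rfl]
    split
    · rw [mul_pow, mul_inv]
    · ring
  have hKsmul : Integrable (fun v : E3 => K (R • v)) := by
    rw [hKcomp]; exact K1_integrable.const_mul _
  have hKint : Integrable K := (integrable_comp_smul_iff volume K hR.ne').1 hKsmul
  have hfinrank : Module.finrank ℝ E3 = 3 := finrank_euclideanSpace_fin
  have hKval : ∫ w, K w = C₀ / R := by
    have h1 : ∫ v : E3, K (R • v) = (R ^ Module.finrank ℝ E3)⁻¹ • ∫ w, K w :=
      Measure.integral_comp_smul_of_nonneg volume K R (hR := hR.le)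
    rw [hKcomp] at h1
    rw [integral_const_mul, hfinrank] at h1
    have hR4 : (R:ℝ)^4 ≠ 0 := by positivity
    have hR3 : (R:ℝ)^3 ≠ 0 := by positivity
    rw [smul_eq_mul] at h1
    have h2 : (R^3) * ((R^4)⁻¹ * C₀) = (R^3) * ((R^3)⁻¹ * (∫ w, K w)) := by rw [h1]
    rw [← mul_assoc, ← mul_assoc, mul_inv_cancel₀ hR3, one_mul] at h2
    rw [← h2]
    field_simp
  -- basic objects
  set F : E3 → ℝ := fun y => ‖φ y‖^2 with hFdef
  have hF : Integrable F := by
    have h := hφ.integrable_norm_rpow two_ne_zero ENNReal.ofNat_ne_top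
    have he : (fun x : E3 => ‖φ x‖ ^ (2:ℝ≥0∞).toReal) = F := by
      funext x
      rw [show ((2:ℝ≥0∞).toReal) = ((2:ℕ):ℝ) from by norm_num, Real.rpow_natCast]
    rwa [he] at h
  have hZmeas : MeasurableSet {z : E3 | R / 2 < ‖z‖} :=
    (isOpen_lt continuous_const continuous_norm).measurableSet
  set G : E3 → ℝ := Set.indicator {z : E3 | R / 2 < ‖z‖} F with hGdef
  have hG : Integrable G := hF.indicator hZmeas
  have hGnn : ∀ z, 0 ≤ G z := fun z => Set.indicator_nonneg (fun y _ => by positivity) z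
  have hIG : ∫ z, G z = ∫ z in {z : E3 | R / 2 < ‖z‖}, ‖φ z‖ ^ 2 := by
    rw [hGdef, integral_indicator hZmeas]
  have hIGnn : 0 ≤ ∫ z, G z := integral_nonneg hGnn
  have hIFnn : 0 ≤ ∫ y, F y := integral_nonneg (fun y => by positivity)
  -- product integrability
  set P : Measure (E3 × E3) := (volume : Measure E3).prod volume with hP
  have h2int : Integrable (fun p : E3 × E3 => G p.2 * K (p.1 - p.2)) P := by
    have := hG.convolution_integrand (ContinuousLinearMap.mul ℝ ℝ) hKint
    simpa using this
  have h1int : Integrable (fun p : E3 × E3 => F p.1 * K (p.1 - p.2)) P := by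
    have h := (hF.convolution_integrand (ContinuousLinearMap.mul ℝ ℝ) hKint).swap
    have heq : ((fun p : E3 × E3 => (ContinuousLinearMap.mul ℝ ℝ) (F p.2) (K (p.1 - p.2))) ∘ Prod.swap)
        = fun p : E3 × E3 => F p.1 * K (p.1 - p.2) := by
      funext p
      simp only [Function.comp_apply, ContinuousLinearMap.mul_apply', Prod.fst_swap,
        Prod.snd_swap, hK]
      rw [norm_sub_rev p.2 p.1]
    rwa [heq] at h
  -- nonnegativity facts
  have hFnn : ∀ y, 0 ≤ F y := fun y => by simp only [hFdef]; positivity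
  -- the dominating function
  set h : E3 × E3 → ℝ := fun p =>
    ε/2 * (F p.1 * K (p.1 - p.2)) + 1/(2*ε) * (G p.2 * K (p.1 - p.2)) with hhdef
  have hhint : Integrable h P := (h1int.const_mul _).add (h2int.const_mul _)
  have hhnn : ∀ p, 0 ≤ h p := by
    intro p
    simp only [hhdef]
    have h1 := hKnn (p.1 - p.2)
    have h2 := hGnn p.2
    have h3 := hFnn p.1
    have he2 : (0:ℝ) ≤ 1/(2*ε) := by positivity
    have he1 : (0:ℝ) ≤ ε/2 := by positivity
    nlinarith [mul_nonneg h3 h1, mul_nonneg h2 h1]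
  -- the region
  set S : Set (E3 × E3) := {p : E3 × E3 | R / 2 < ‖p.2‖ ∧ R / 4 < ‖p.1 - p.2‖} with hSdef
  have hSopen : IsOpen S := by
    rw [hSdef, Set.setOf_and]
    exact (isOpen_lt continuous_const continuous_snd.norm).inter
      (isOpen_lt continuous_const (continuous_fst.sub continuous_snd).norm)
  have hSmeas : MeasurableSet S := hSopen.measurableSet
  -- pointwise bound on S
  have hptwise : ∀ p ∈ S, ‖φ p.1‖ * ‖φ p.2‖ / ‖p.1 - p.2‖ ^ 4 *
      (u (‖p.1‖ / R) - u (‖p.2‖ / R)) ^ 2 ≤ h p := by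
    rintro p ⟨hz, hd⟩
    have hd0 : (0:ℝ) < ‖p.1 - p.2‖ := lt_trans (by positivity) hd
    have hK1 : K (p.1 - p.2) = (‖p.1 - p.2‖^4)⁻¹ := by
      simp only [hK]; rw [if_pos hd]
    have hG1 : G p.2 = ‖φ p.2‖^2 :=
      Set.indicator_of_mem (show p.2 ∈ {z : E3 | R/2 < ‖z‖} from hz) F
    have hF1 : F p.1 = ‖φ p.1‖^2 := rfl
    simp only [hhdef, hK1, hG1, hF1]
    set a := ‖φ p.1‖ with ha
    set b := ‖φ p.2‖ with hb
    set d := ‖p.1 - p.2‖ with hdd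
    have ht : (u (‖p.1‖ / R) - u (‖p.2‖ / R)) ^ 2 ≤ 1 := by
      obtain ⟨h1, h2⟩ := hu_range (‖p.1‖ / R)
      obtain ⟨h3, h4⟩ := hu_range (‖p.2‖ / R)
      nlinarith
    have h0 : a * b / d ^ 4 * (u (‖p.1‖ / R) - u (‖p.2‖ / R)) ^ 2 ≤ a * b / d ^ 4 := by
      have : a * b / d ^ 4 * (u (‖p.1‖ / R) - u (‖p.2‖ / R)) ^ 2 ≤ a * b / d ^ 4 * 1 :=
        mul_le_mul_of_nonneg_left ht (by positivity)
      linarith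
    have key : 2 * ε * (a * b) ≤ ε^2 * a^2 + b^2 := by nlinarith [sq_nonneg (ε * a - b)]
    have hab : a * b ≤ ε/2 * a^2 + 1/(2*ε) * b^2 := by
      rw [show ε/2 * a^2 + 1/(2*ε) * b^2 = (ε^2 * a^2 + b^2)/(2*ε) by field_simp,
        le_div_iff₀ (by positivity)]
      linarith
    calc a * b / d ^ 4 * (u (‖p.1‖ / R) - u (‖p.2‖ / R)) ^ 2
        ≤ a * b / d ^ 4 := h0
      _ = a * b * (d^4)⁻¹ := by rw [div_eq_mul_inv]
      _ ≤ (ε/2 * a^2 + 1/(2*ε) * b^2) * (d^4)⁻¹ :=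
          mul_le_mul_of_nonneg_right hab (by positivity)
      _ = ε/2 * (a^2 * (d^4)⁻¹) + 1/(2*ε) * (b^2 * (d^4)⁻¹) := by ring
  -- the measure on the product is the product measure
  have hvol : (volume : Measure (E3 × E3)) = P := by rw [hP]; exact Measure.volume_eq_prod E3 E3
  rw [hvol]
  -- chain of inequalities
  have step1 : ∫ p in S, ‖φ p.1‖ * ‖φ p.2‖ / ‖p.1 - p.2‖ ^ 4 *
      (u (‖p.1‖ / R) - u (‖p.2‖ / R)) ^ 2 ∂P ≤ ∫ p in S, h p ∂P := by
    refine integral_mono_of_nonneg (ae_of_all _ fun p => by positivity) hhint.restrict ?_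
    exact (ae_restrict_iff' hSmeas).2 (ae_of_all _ hptwise)
  have step2 : ∫ p in S, h p ∂P ≤ ∫ p, h p ∂P :=
    setIntegral_le_integral hhint (ae_of_all _ hhnn)
  -- compute the full integral
  have hI1 : ∫ p, F p.1 * K (p.1 - p.2) ∂P = (∫ y, F y) * (C₀ / R) := by
    rw [hP, integral_prod _ h1int]
    have : ∀ y : E3, (∫ z, F y * K (y - z)) = F y * (C₀ / R) := by
      intro y
      rw [integral_const_mul, integral_sub_left_eq_self K volume y, hKval]
    simp_rw [this]
    rw [integral_mul_const]
  have hI2 : ∫ p, G p.2 * K (p.1 - p.2) ∂P = (∫ z, G z) * (C₀ / R) := by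
    rw [hP, integral_prod_symm _ h2int]
    have : ∀ z : E3, (∫ y, G z * K (y - z)) = G z * (C₀ / R) := by
      intro z
      rw [integral_const_mul, integral_sub_right_eq_self K z, hKval]
    simp_rw [this]
    rw [integral_mul_const]
  have hItot : ∫ p, h p ∂P
      = ε/2 * ((∫ y, F y) * (C₀ / R)) + 1/(2*ε) * ((∫ z, G z) * (C₀ / R)) := by
    simp only [hhdef]
    rw [integral_add (h1int.const_mul _) (h2int.const_mul _), integral_const_mul,
      integral_const_mul, hI1, hI2]
  refine le_trans (le_trans step1 step2) ?_
  rw [hItot, ← hIG]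
  have : ε/2 * ((∫ y, F y) * (C₀ / R)) + 1/(2*ε) * ((∫ z, G z) * (C₀ / R))
      = C₀ / 2 * (ε * (∫ y, F y) / R + 1 / (ε * R) * (∫ z, G z)) := by
    field_simp
  rw [this]
end
end

section
/- Let u : [0,∞) → [0,1] be C¹ with bounded derivative, and let R_3 = {(y,z) ∈ ℝ³×ℝ³ : |y| ≤ |z|, |z| > R/2, |y−z| < R/4}. Then there exists c such that for all ε > 0, ∫∫_{R_3} |φ(y)||φ(z)|/|y−z|⁴ · |u(|y|/R)−u(|z|/R)|² dy dz ≤ (cε/R)‖φ‖² + (c/(εR)) ‖φ·χ(|z|>R/4)‖² for all φ ∈ L²(ℝ³). -/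
/-
On the region, `|z| > R/2` and `|y - z| < R/4`. The Lipschitz bound on `u` turns the
factor `(u(|y|/R) - u(|z|/R))²` into `L² |y - z|² / R²`, so the kernel `|y - z|⁻⁴` becomes
`|y - z|⁻²` truncated to `|y - z| < R/4`, and the weighted AM-GM inequality splits
`|φ(y)| |φ(z)|` into `ε |φ(y)|² + ε⁻¹ |φ(z)|²`, where `|z| > R/4` may be recorded on the second
term. Each term is then a convolution of `|φ|²` with the truncated kernel, whose integral
over `ℝ³` is `π R` by polar coordinates.
-/

open MeasureTheory Real

noncomputable section

open Metric Set Module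
open scoped ENNReal NNReal

theorem pow_sub_one_mul_inv_sq_eqOn {d : ℕ} (hd : 3 ≤ d) :
    EqOn (fun y : ℝ => y ^ (d - 1) • (y ^ 2)⁻¹) (fun y => y ^ (d - 3)) (Ioi 0) := by
  intro y (hy : 0 < y)
  show y ^ (d - 1) * (y ^ 2)⁻¹ = y ^ (d - 3)
  rw [show d - 1 = d - 3 + 2 by omega, pow_add, mul_inv_cancel_right₀ (by positivity)]

theorem integral_Ioi_pow_mul_indicator_inv_sq {d : ℕ} (hd : 3 ≤ d) {r : ℝ} (hr : 0 ≤ r) :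
    ∫ y in Ioi (0 : ℝ), y ^ (d - 1) • (Iio r).indicator (fun y => (y ^ 2)⁻¹) y
      = r ^ (d - 2) / (d - 2) := by
  have hind : ∀ y : ℝ, y ^ (d - 1) • (Iio r).indicator (fun y => (y ^ 2)⁻¹) y
      = (Iio r).indicator (fun y => y ^ (d - 1) • (y ^ 2)⁻¹) y := by
    intro y
    by_cases hy : y < r <;> simp [hy]
  rw [setIntegral_congr_fun measurableSet_Ioi fun y _ => hind y,
    setIntegral_indicator measurableSet_Iio, Ioi_inter_Iio,
    setIntegral_congr_fun measurableSet_Ioo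
      ((pow_sub_one_mul_inv_sq_eqOn hd).mono Ioo_subset_Ioi_self),
    ← integral_Ioc_eq_integral_Ioo, ← intervalIntegral.integral_of_le hr, integral_pow,
    show d - 3 + 1 = d - 2 by omega, zero_pow (by omega), sub_zero]
  push_cast [hd, show 2 ≤ d by omega]
  ring

section HaarMeasure

variable {E : Type*} [NormedAddCommGroup E] [NormedSpace ℝ E] [FiniteDimensional ℝ E]
  [MeasurableSpace E] [BorelSpace E] (μ : Measure E) [μ.IsAddHaarMeasure]

theorem lintegral_ball_inv_norm_sq (hE : 3 ≤ finrank ℝ E) {r : ℝ} (hr : 0 ≤ r) :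
    ∫⁻ x in ball 0 r, ENNReal.ofReal (‖x‖ ^ 2)⁻¹ ∂μ = ENNReal.ofReal
      (finrank ℝ E / (finrank ℝ E - 2) * μ.real (ball 0 1) * r ^ (finrank ℝ E - 2)) := by
  have : Nontrivial E := Module.nontrivial_of_finrank_pos (R := ℝ) (by omega)
  set g : ℝ → ℝ := (Iio r).indicator fun y => (y ^ 2)⁻¹
  have hg : (ball 0 r).indicator (fun x : E => (‖x‖ ^ 2)⁻¹) = fun x => g ‖x‖ := by
    ext x
    by_cases hx : ‖x‖ < r <;> simp [g, hx]
  have hint : Integrable (fun x : E => g ‖x‖) μ := by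
    rw [← hg, integrable_indicator_iff measurableSet_ball,
      integrableOn_fun_norm_addHaar μ (f := fun y => (y ^ 2)⁻¹),
      integrableOn_congr_fun ((pow_sub_one_mul_inv_sq_eqOn hE).mono Ioo_subset_Ioi_self)
        measurableSet_Ioo]
    exact (continuous_pow _).integrableOn_Icc.mono_set Ioo_subset_Icc_self
  have hg' : (ball 0 r).indicator (fun x : E => ENNReal.ofReal (‖x‖ ^ 2)⁻¹)
      = fun x => ENNReal.ofReal (g ‖x‖) := by
    ext x
    by_cases hx : ‖x‖ < r <;> simp [g, hx]
  rw [← lintegral_indicator measurableSet_ball, hg',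
    ← ofReal_integral_eq_lintegral_ofReal hint
      (.of_forall fun x => indicator_nonneg (fun y _ => by positivity) _),
    integral_fun_norm_addHaar, integral_Ioi_pow_mul_indicator_inv_sq hE hr]
  simp only [nsmul_eq_mul, smul_eq_mul]
  ring_nf

end HaarMeasure

def truncInvNormSq {E : Type*} [SeminormedAddCommGroup E] (r : ℝ) : E → ℝ≥0∞ :=
  (ball 0 r).indicator fun w => ENNReal.ofReal (‖w‖ ^ 2)⁻¹

theorem measurable_truncInvNormSq {E : Type*} [SeminormedAddCommGroup E] [MeasurableSpace E]
    [OpensMeasurableSpace E] (r : ℝ) : Measurable (truncInvNormSq (E := E) r) :=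
  Measurable.indicator (by fun_prop) measurableSet_ball

theorem lintegral_truncInvNormSq_fin_three {r : ℝ} (hr : 0 ≤ r) :
    ∫⁻ w : E3, truncInvNormSq r w = ENNReal.ofReal (4 * π * r) := by
  rw [truncInvNormSq, lintegral_indicator measurableSet_ball,
    lintegral_ball_inv_norm_sq _ (by simp) hr]
  simp only [finrank_euclideanSpace_fin, measureReal_def, EuclideanSpace.volume_ball_fin_three,
    ENNReal.ofReal_one, one_pow, one_mul, ENNReal.toReal_ofReal (by positivity : 0 ≤ π * 4 / 3)]
  congr 1
  push_cast
  ring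

section Convolution

variable {G : Type*} [MeasurableSpace G] [AddGroup G] [MeasurableAdd G] [MeasurableSub₂ G]
  {μ : Measure G} [SFinite μ]

theorem lintegral_prod_mul_sub_left [MeasurableNeg G] [μ.IsAddLeftInvariant] [μ.IsNegInvariant]
    {f : G → ℝ≥0∞} (hf : AEMeasurable f μ) {k : G → ℝ≥0∞} (hk : Measurable k) :
    ∫⁻ p, f p.1 * k (p.1 - p.2) ∂μ.prod μ = (∫⁻ x, f x ∂μ) * ∫⁻ x, k x ∂μ := by
  have hfk : AEMeasurable (fun p : G × G => f p.1 * k (p.1 - p.2)) (μ.prod μ) :=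
    hf.comp_fst.mul (hk.comp measurable_sub).aemeasurable
  rw [lintegral_prod _ hfk]
  have hinner : ∀ x, ∫⁻ y, f x * k (x - y) ∂μ = f x * ∫⁻ y, k y ∂μ := fun x => by
    rw [lintegral_const_mul _ (by fun_prop), lintegral_sub_left_eq_self]
  simp_rw [hinner]
  exact lintegral_mul_const'' _ hf

theorem lintegral_prod_sub_mul_right [μ.IsAddRightInvariant]
    {f : G → ℝ≥0∞} (hf : AEMeasurable f μ) {k : G → ℝ≥0∞} (hk : Measurable k) :
    ∫⁻ p, k (p.1 - p.2) * f p.2 ∂μ.prod μ = (∫⁻ x, k x ∂μ) * ∫⁻ x, f x ∂μ := by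
  have hkf : AEMeasurable (fun p : G × G => k (p.1 - p.2) * f p.2) (μ.prod μ) :=
    (hk.comp measurable_sub).aemeasurable.mul hf.comp_snd
  rw [lintegral_prod_symm _ hkf]
  have hinner : ∀ y, ∫⁻ x, k (x - y) * f y ∂μ = (∫⁻ x, k x ∂μ) * f y := fun y => by
    rw [lintegral_mul_const _ (by fun_prop), lintegral_sub_right_eq_self]
  simp_rw [hinner]
  exact lintegral_const_mul'' _ hf

end Convolution

theorem mul_le_half_mul_sq_add_inv_mul_sq {ε : ℝ} (hε : 0 < ε) (a b : ℝ) :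
    a * b ≤ (ε * a ^ 2 + ε⁻¹ * b ^ 2) / 2 := by
  have hsq : ε⁻¹ * (ε * a - b) ^ 2 = ε * a ^ 2 + ε⁻¹ * b ^ 2 - 2 * (a * b) := by
    field_simp
    ring
  linarith [show 0 ≤ ε⁻¹ * (ε * a - b) ^ 2 by positivity]

theorem LipschitzWith.sq_sub_comp_norm_div_le {E : Type*} [SeminormedAddCommGroup E]
    {u : ℝ → ℝ} {K : ℝ≥0} (hu : LipschitzWith K u) {R : ℝ} (hR : 0 < R) (y z : E) :
    (u (‖y‖ / R) - u (‖z‖ / R)) ^ 2 ≤ K ^ 2 * ‖y - z‖ ^ 2 / R ^ 2 := by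
  have h := hu.dist_le_mul (‖y‖ / R) (‖z‖ / R)
  rw [Real.dist_eq, Real.dist_eq, ← sub_div, abs_div, abs_of_pos hR] at h
  have hlip : |u (‖y‖ / R) - u (‖z‖ / R)| ≤ K * (‖y - z‖ / R) :=
    h.trans (by gcongr; exact abs_norm_sub_norm_le y z)
  calc (u (‖y‖ / R) - u (‖z‖ / R)) ^ 2 = |u (‖y‖ / R) - u (‖z‖ / R)| ^ 2 := (sq_abs _).symm
    _ ≤ (K * (‖y - z‖ / R)) ^ 2 := by gcongr
    _ = K ^ 2 * ‖y - z‖ ^ 2 / R ^ 2 := by ring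

theorem LipschitzWith.radial_integrand_le {E : Type*} [SeminormedAddCommGroup E] {u : ℝ → ℝ}
    {K : ℝ≥0} (hu : LipschitzWith K u) {R ε : ℝ} (hR : 0 < R) (hε : 0 < ε) {a b : ℝ}
    (ha : 0 ≤ a) (hb : 0 ≤ b) (y z : E) :
    a * b / ‖y - z‖ ^ 4 * (u (‖y‖ / R) - u (‖z‖ / R)) ^ 2
      ≤ (K ^ 2 * ε / (2 * R ^ 2) * a ^ 2 + K ^ 2 / (2 * ε * R ^ 2) * b ^ 2) * (‖y - z‖ ^ 2)⁻¹ := by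
  rcases eq_or_lt_of_le (norm_nonneg (y - z)) with hyz | hyz
  · -- both sides vanish, as `x / 0 = 0` and `0⁻¹ = 0`
    rw [← hyz]
    simp
  calc a * b / ‖y - z‖ ^ 4 * (u (‖y‖ / R) - u (‖z‖ / R)) ^ 2
      ≤ a * b / ‖y - z‖ ^ 4 * (K ^ 2 * ‖y - z‖ ^ 2 / R ^ 2) := by
        gcongr
        exact hu.sq_sub_comp_norm_div_le hR y z
    _ = K ^ 2 / R ^ 2 * (a * b) * (‖y - z‖ ^ 2)⁻¹ := by
        field_simp
    _ ≤ K ^ 2 / R ^ 2 * ((ε * a ^ 2 + ε⁻¹ * b ^ 2) / 2) * (‖y - z‖ ^ 2)⁻¹ := by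
        gcongr
        exact mul_le_half_mul_sq_add_inv_mul_sq hε a b
    _ = _ := by
        field_simp

theorem ofReal_integrand_le_truncInvNormSq {E F : Type*} [SeminormedAddCommGroup E]
    [SeminormedAddCommGroup F] {u : ℝ → ℝ} {K : ℝ≥0} (hu : LipschitzWith K u) {R ε : ℝ}
    (hR : 0 < R) (hε : 0 < ε) (φ : E → F) {y z : E} (hz : R / 2 < ‖z‖) (hyz : ‖y - z‖ < R / 4) :
    ENNReal.ofReal (‖φ y‖ * ‖φ z‖ / ‖y - z‖ ^ 4 * (u (‖y‖ / R) - u (‖z‖ / R)) ^ 2)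
      ≤ ENNReal.ofReal (K ^ 2 * ε / (2 * R ^ 2) * ‖φ y‖ ^ 2) * truncInvNormSq (R / 4) (y - z)
        + truncInvNormSq (R / 4) (y - z)
          * ENNReal.ofReal ({z : E | R / 4 < ‖z‖}.indicator
              (fun z => K ^ 2 / (2 * ε * R ^ 2) * ‖φ z‖ ^ 2) z) := by
  have hk : truncInvNormSq (R / 4) (y - z) = ENNReal.ofReal (‖y - z‖ ^ 2)⁻¹ :=
    indicator_of_mem (mem_ball_zero_iff.2 hyz) _
  have hz' : z ∈ {z : E | R / 4 < ‖z‖} := by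
    show R / 4 < ‖z‖
    linarith
  rw [hk, indicator_of_mem hz', ← ENNReal.ofReal_mul (by positivity),
    ← ENNReal.ofReal_mul (by positivity), ← ENNReal.ofReal_add (by positivity) (by positivity)]
  refine ENNReal.ofReal_le_ofReal ((hu.radial_integrand_le hR hε
    (norm_nonneg _) (norm_nonneg _) y z).trans_eq ?_)
  ring

theorem lintegral_prod_truncInvNormSq_fin_three {a b : E3 → ℝ} (ha : Integrable a)
    (hb : Integrable b) (ha0 : ∀ y, 0 ≤ a y) (hb0 : ∀ z, 0 ≤ b z) {r : ℝ} (hr : 0 ≤ r) :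
    ∫⁻ p : E3 × E3, ENNReal.ofReal (a p.1) * truncInvNormSq r (p.1 - p.2)
        + truncInvNormSq r (p.1 - p.2) * ENNReal.ofReal (b p.2)
      = ENNReal.ofReal (4 * π * r * ((∫ y, a y) + ∫ z, b z)) := by
  have hk := measurable_truncInvNormSq (E := E3) r
  have ha' := ha.aemeasurable.ennreal_ofReal
  have hb' := hb.aemeasurable.ennreal_ofReal
  have hak : AEMeasurable
      (fun p : E3 × E3 => ENNReal.ofReal (a p.1) * truncInvNormSq r (p.1 - p.2))
      (volume.prod volume) :=
    ha'.comp_fst.mul (hk.comp measurable_sub).aemeasurable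
  rw [Measure.volume_eq_prod, lintegral_add_left' hak, lintegral_prod_mul_sub_left ha' hk,
    lintegral_prod_sub_mul_right hb' hk, lintegral_truncInvNormSq_fin_three hr,
    ← ofReal_integral_eq_lintegral_ofReal ha (.of_forall ha0),
    ← ofReal_integral_eq_lintegral_ofReal hb (.of_forall hb0),
    ← ENNReal.ofReal_mul (integral_nonneg ha0), ← ENNReal.ofReal_mul (by positivity),
    ← ENNReal.ofReal_add (mul_nonneg (integral_nonneg ha0) (by positivity))
      (mul_nonneg (by positivity) (integral_nonneg hb0))]
  congr 1
  ring

theorem setIntegral_regionThree_le {F : Type*} [NormedAddCommGroup F] {u : ℝ → ℝ} {K : ℝ≥0}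
    (hu : LipschitzWith K u) {R ε : ℝ} (hR : 0 < R) (hε : 0 < ε) {φ : E3 → F}
    (hφ : MemLp φ 2) :
    ∫ p in {p : E3 × E3 | ‖p.1‖ ≤ ‖p.2‖ ∧ R / 2 < ‖p.2‖ ∧ ‖p.1 - p.2‖ < R / 4},
        ‖φ p.1‖ * ‖φ p.2‖ / ‖p.1 - p.2‖ ^ 4 * (u (‖p.1‖ / R) - u (‖p.2‖ / R)) ^ 2
      ≤ (π * K ^ 2 / 2 * ε / R) * (∫ y : E3, ‖φ y‖ ^ 2)
        + (π * K ^ 2 / 2 / (ε * R)) * ∫ z in {z : E3 | R / 4 < ‖z‖}, ‖φ z‖ ^ 2 := by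
  set S := {p : E3 × E3 | ‖p.1‖ ≤ ‖p.2‖ ∧ R / 2 < ‖p.2‖ ∧ ‖p.1 - p.2‖ < R / 4}
  set f : E3 × E3 → ℝ := fun p =>
    ‖φ p.1‖ * ‖φ p.2‖ / ‖p.1 - p.2‖ ^ 4 * (u (‖p.1‖ / R) - u (‖p.2‖ / R)) ^ 2
  set U := {z : E3 | R / 4 < ‖z‖}
  set a : E3 → ℝ := fun y => K ^ 2 * ε / (2 * R ^ 2) * ‖φ y‖ ^ 2
  set b : E3 → ℝ := U.indicator fun z => K ^ 2 / (2 * ε * R ^ 2) * ‖φ z‖ ^ 2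
  set k : E3 → ℝ≥0∞ := truncInvNormSq (R / 4)
  have hsq : Integrable (fun y => ‖φ y‖ ^ 2) := hφ.integrable_norm_pow two_ne_zero
  have hU : MeasurableSet U := measurableSet_lt measurable_const measurable_norm
  have hS : MeasurableSet S := by measurability
  have hb : Integrable b := (hsq.const_mul _).indicator hU
  have ha0 : ∀ y, 0 ≤ a y := fun y => by positivity
  have hb0 : ∀ z, 0 ≤ b z := indicator_nonneg fun z _ => by positivity
  have hlin : ∫⁻ p in S, ENNReal.ofReal ‖f p‖
      ≤ ENNReal.ofReal (4 * π * (R / 4) * ((∫ y, a y) + ∫ z, b z)) :=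
    calc ∫⁻ p in S, ENNReal.ofReal ‖f p‖
        ≤ ∫⁻ p : E3 × E3, ENNReal.ofReal (a p.1) * k (p.1 - p.2)
            + k (p.1 - p.2) * ENNReal.ofReal (b p.2) :=
          (setLIntegral_mono' hS fun p (hp : p ∈ S) => by
            rw [Real.norm_of_nonneg (by positivity)]
            exact ofReal_integrand_le_truncInvNormSq hu hR hε φ hp.2.1 hp.2.2).trans
          (setLIntegral_le_lintegral _ _)
      _ = _ := lintegral_prod_truncInvNormSq_fin_three (hsq.const_mul _) hb ha0 hb0
          (by positivity)
  -- `norm_integral_le_lintegral_norm` needs no measurability of the integrand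
  calc ∫ p in S, f p ≤ ‖∫ p in S, f p‖ := le_norm_self _
    _ ≤ (∫⁻ p in S, ENNReal.ofReal ‖f p‖).toReal := norm_integral_le_lintegral_norm _
    _ ≤ _ := ENNReal.toReal_le_of_le_ofReal
          (mul_nonneg (by positivity) (add_nonneg (integral_nonneg ha0) (integral_nonneg hb0))) hlin
    _ = _ := by
      rw [integral_indicator hU, integral_const_mul, integral_const_mul]
      generalize ∫ y, ‖φ y‖ ^ 2 = N
      generalize ∫ z in U, ‖φ z‖ ^ 2 = NU
      field_simp

theorem region_three_estimate_general
    (u : ℝ → ℝ) (hu_smooth : ContDiff ℝ 1 u)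
    (hu_deriv : ∃ L : ℝ, ∀ x, |deriv u x| ≤ L) :
    ∃ c : ℝ, ∀ R > (0 : ℝ), ∀ ε > (0 : ℝ), ∀ φ : E3 → ℂ, MemLp φ 2 →
      ∫ p in {p : E3 × E3 | ‖p.1‖ ≤ ‖p.2‖ ∧ R / 2 < ‖p.2‖ ∧ ‖p.1 - p.2‖ < R / 4},
          ‖φ p.1‖ * ‖φ p.2‖ / ‖p.1 - p.2‖ ^ 4 * (u (‖p.1‖ / R) - u (‖p.2‖ / R)) ^ 2
      ≤ (c * ε / R) * (∫ y : E3, ‖φ y‖ ^ 2)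
          + (c / (ε * R)) * ∫ z in {z : E3 | R / 4 < ‖z‖}, ‖φ z‖ ^ 2 := by
  obtain ⟨L, hL⟩ := hu_deriv
  have hu : LipschitzWith L.toNNReal u :=
    lipschitzWith_of_nnnorm_deriv_le (hu_smooth.differentiable one_ne_zero) fun x =>
      (hL x).trans (le_coe_toNNReal L)
  exact ⟨π * L.toNNReal ^ 2 / 2, fun R hR ε hε φ hφ => setIntegral_regionThree_le hu hR hε hφ⟩

theorem region_three_estimate
    (u : ℝ → ℝ) (hu_smooth : ContDiff ℝ 1 u)
    (hu_range : ∀ x, 0 ≤ u x ∧ u x ≤ 1)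
    (hu_deriv : ∃ L : ℝ, ∀ x, |deriv u x| ≤ L) :
    ∃ c : ℝ, ∀ R > (0 : ℝ), ∀ ε > (0 : ℝ), ∀ φ : E3 → ℂ, MemLp φ 2 →
      ∫ p in {p : E3 × E3 | ‖p.1‖ ≤ ‖p.2‖ ∧ R / 2 < ‖p.2‖ ∧ ‖p.1 - p.2‖ < R / 4},
          ‖φ p.1‖ * ‖φ p.2‖ / ‖p.1 - p.2‖ ^ 4 * (u (‖p.1‖ / R) - u (‖p.2‖ / R)) ^ 2
      ≤ (c * ε / R) * (∫ y : E3, ‖φ y‖ ^ 2)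
          + (c / (ε * R)) * ∫ z in {z : E3 | R / 4 < ‖z‖}, ‖φ z‖ ^ 2 :=
  region_three_estimate_general u hu_smooth hu_deriv
end
end

section
/- For any ε' > 0, the function k ↦ |∇_k ( ε_{λ,i}(k) ζ(|k|) |k|^{-1/2} )| belongs to L^{2−ε'}(ℝ³), where ε_{λ,i} is the i-th component of the polarization vector ε_λ and ζ ∈ C¹ with compact support. -/
/-!
Off the coordinate planes, the product rule and `|w| ≤ 1` bound the gradient by
`|ζ(|k|)| |k|^{-1/2} |∇w(k)| + |(ζ(r) r^{-1/2})'|` at `r = |k|`, hence, on the support of `ζ`,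
by a multiple of `|k|^{-1/2} ρ⁻¹ + |k|^{-1/2}`, where `ρ = √(k₀² + k₁²) ≤ |k|`.
As `|k_i| ≤ |k|` and `√(|k₀| |k₁|) ≤ ρ`, both terms are dominated by `C ∏ᵢ |k_i|^{-1/2}`
truncated to `|k_i| < R`. The `p`-th power of this product integrates to a product of
one-dimensional integrals `∫_{-R}^{R} |t|^{-p/2} dt`, finite for `p < 2`.
-/

open MeasureTheory Real

noncomputable section

open Set Metric Filter Topology

section ProductRule

variable {E : Type*} [NormedAddCommGroup E] [NormedSpace ℝ E] {w h : E → ℝ} {k : E}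

lemma DifferentiableAt.of_mul_of_ne_zero (hwh : DifferentiableAt ℝ (fun x => w x * h x) k)
    (hh : DifferentiableAt ℝ h k) (hk : h k ≠ 0) : DifferentiableAt ℝ w k := by
  refine (hwh.mul (hh.inv hk)).congr_of_eventuallyEq ?_
  filter_upwards [hh.continuousAt.eventually_ne hk] with x hx
  simp [hx]

lemma norm_fderiv_mul_le_of_abs_le_one_of_eq_zero (hw : ∀ x, |w x| ≤ 1)
    (hh : DifferentiableAt ℝ h k) (hk : h k = 0) : ‖fderiv ℝ (fun x => w x * h x) k‖ ≤ ‖fderiv ℝ h k‖ := by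
  by_cases hwh : DifferentiableAt ℝ (fun x => w x * h x) k
  swap
  · simp [fderiv_zero_of_not_differentiableAt hwh]
  refine ContinuousLinearMap.opNorm_le_bound _ (norm_nonneg _) fun v => ?_
  -- `w` need not be differentiable at `k`: since `h k = 0` and `|w| ≤ 1`, the difference
  -- quotients of `w * h` are dominated by those of `h`.
  have hquot : ∀ c : ℝ, ‖c • (w (k + c⁻¹ • v) * h (k + c⁻¹ • v) - w k * h k)‖
      ≤ ‖c • (h (k + c⁻¹ • v) - h k)‖ := fun c => by
    simp only [hk, mul_zero, sub_zero, norm_smul, Real.norm_eq_abs, abs_mul]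
    gcongr
    exact mul_le_of_le_one_left (abs_nonneg _) (hw _)
  exact (le_of_tendsto_of_tendsto' (hwh.hasFDerivAt.lim_real v).norm
    (hh.hasFDerivAt.lim_real v).norm hquot).trans ((fderiv ℝ h k).le_opNorm v)

-- Where `w` is not differentiable, `fderiv ℝ w k = 0` and the bound reads `‖fderiv ℝ h k‖`.
lemma norm_fderiv_mul_le_of_abs_le_one (hw : ∀ x, |w x| ≤ 1) (hh : DifferentiableAt ℝ h k) :
    ‖fderiv ℝ (fun x => w x * h x) k‖ ≤ |h k| * ‖fderiv ℝ w k‖ + ‖fderiv ℝ h k‖ := by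
  by_cases hwk : DifferentiableAt ℝ w k
  · rw [fderiv_fun_mul hwk hh]
    calc ‖w k • fderiv ℝ h k + h k • fderiv ℝ w k‖
        ≤ |w k| * ‖fderiv ℝ h k‖ + |h k| * ‖fderiv ℝ w k‖ := by
          simpa only [norm_smul, Real.norm_eq_abs] using
            norm_add_le (w k • fderiv ℝ h k) (h k • fderiv ℝ w k)
      _ ≤ 1 * ‖fderiv ℝ h k‖ + |h k| * ‖fderiv ℝ w k‖ := by gcongr; exact hw k
      _ = _ := by ring
  by_cases hk : h k = 0
  · exact (norm_fderiv_mul_le_of_abs_le_one_of_eq_zero hw hh hk).trans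
      (le_add_of_nonneg_left (by positivity))
  · rw [fderiv_zero_of_not_differentiableAt fun hwh => hwk (hwh.of_mul_of_ne_zero hh hk), norm_zero]
    positivity

end ProductRule

section Radial

variable {E : Type*} [NormedAddCommGroup E] [InnerProductSpace ℝ E] {φ : ℝ → ℝ} {k : E}

lemma differentiableAt_comp_norm (hφ : DifferentiableAt ℝ φ ‖k‖) (hk : k ≠ 0) :
    DifferentiableAt ℝ (fun x => φ ‖x‖) k :=
  hφ.comp k ((contDiffAt_norm ℝ hk).differentiableAt one_ne_zero)

lemma norm_fderiv_comp_norm (hφ : DifferentiableAt ℝ φ ‖k‖) (hk : k ≠ 0) :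
    ‖fderiv ℝ (fun x => φ ‖x‖) k‖ = |deriv φ ‖k‖| := by
  have hnorm : DifferentiableAt ℝ (‖·‖) k := (contDiffAt_norm ℝ hk).differentiableAt one_ne_zero
  have : Nontrivial E := ⟨⟨k, 0, hk⟩⟩
  have hd : HasFDerivAt (fun x => φ ‖x‖) (deriv φ ‖k‖ • fderiv ℝ (‖·‖) k) k :=
    hφ.hasDerivAt.comp_hasFDerivAt k hnorm.hasFDerivAt
  rw [hd.fderiv, norm_smul, norm_fderiv_norm hnorm, mul_one, Real.norm_eq_abs]

end Radial

lemma abs_deriv_mul_rpow_le {ζ : ℝ → ℝ} {r s : ℝ} (hζ : DifferentiableAt ℝ ζ r) (hr : 0 < r) :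
    |deriv (fun t => ζ t * t ^ s) r| ≤ |deriv ζ r| * r ^ s + |s| * |ζ r| * r ^ (s - 1) := by
  rw [(hζ.hasDerivAt.fun_mul (hasDerivAt_rpow_const (Or.inl hr.ne'))).deriv]
  calc _ ≤ |deriv ζ r * r ^ s| + |ζ r * (s * r ^ (s - 1))| := abs_add_le _ _
    _ = _ := by
      simp only [abs_mul, abs_of_pos (rpow_pos_of_pos hr _)]
      ring

lemma memLp_indicator_ball_abs_rpow_neg {R q p : ℝ} (hp : 0 < p) (hqp : q * p < 1) :
    MemLp ((ball (0 : ℝ) R).indicator fun t => |t| ^ (-q)) (ENNReal.ofReal p) := by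
  have hmeas : Measurable ((ball (0 : ℝ) R).indicator fun t => |t| ^ (-q)) :=
    (measurable_abs.pow_const _).indicator measurableSet_ball
  rw [← integrable_norm_rpow_iff hmeas.aestronglyMeasurable (by simpa using hp)
    ENNReal.ofReal_ne_top, ENNReal.toReal_ofReal hp.le]
  have hpow : (fun t => ‖(ball (0 : ℝ) R).indicator (fun t => |t| ^ (-q)) t‖ ^ p)
      = (ball (0 : ℝ) R).indicator fun t => ‖t‖ ^ (-(q * p)) := by
    ext t
    by_cases ht : t ∈ ball (0 : ℝ) R
    · simp only [indicator_of_mem ht, Real.norm_eq_abs,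
        abs_of_nonneg (rpow_nonneg (abs_nonneg t) _), ← rpow_mul (abs_nonneg t), neg_mul]
    · simp [indicator_of_notMem ht, zero_rpow hp.ne']
  rw [hpow, integrable_indicator_iff measurableSet_ball]
  refine integrableOn_ball_of_norm_le_rpow (C := 1) (α := q * p) (by simp) (by simpa using hqp)
    (ae_of_all _ fun t => by simp [abs_of_nonneg (rpow_nonneg (abs_nonneg t) _)])
    (measurable_norm.pow_const _).aestronglyMeasurable

lemma memLp_euclideanSpace_prod_apply {ι : Type*} [Fintype ι] {χ : ℝ → ℝ} (hχm : Measurable χ)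
    {p : ENNReal} (hp0 : p ≠ 0) (hpt : p ≠ ⊤) (hχ : MemLp χ p) :
    MemLp (fun k : EuclideanSpace ℝ ι => ∏ i, χ (k i)) p := by
  have hmeas : Measurable fun k : EuclideanSpace ℝ ι => ∏ i, χ (k i) := by fun_prop
  rw [← integrable_norm_rpow_iff hmeas.aestronglyMeasurable hp0 hpt]
  have hnorm : (fun k : EuclideanSpace ℝ ι => ‖∏ i, χ (k i)‖ ^ p.toReal)
      = fun k => ∏ i, ‖χ (k i)‖ ^ p.toReal := by
    ext k
    rw [norm_prod, Real.finsetProd_rpow _ _ fun i _ => norm_nonneg _]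
  rw [hnorm]
  exact ((PiLp.volume_preserving_ofLp ι).integrable_comp_emb
    (MeasurableEquiv.toLp 2 (ι → ℝ)).symm.measurableEmbedding).mpr
    (Integrable.fintype_prod fun _ => hχ.integrable_norm_rpow hp0 hpt)

lemma EuclideanSpace.ae_forall_apply_ne {ι : Type*} [Fintype ι] (c : ℝ) :
    ∀ᵐ k : EuclideanSpace ℝ ι, ∀ i, k i ≠ c :=
  (PiLp.volume_preserving_ofLp ι).quasiMeasurePreserving.ae
    (ae_all_iff.2 fun i => Measure.ae_eval_ne (fun _ => volume) i c)

lemma EuclideanSpace.sqrt_sq_add_sq_le_norm {ι : Type*} [Fintype ι] (k : EuclideanSpace ℝ ι)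
    {i j : ι} (hij : i ≠ j) : √(k i ^ 2 + k j ^ 2) ≤ ‖k‖ := by
  classical
  rw [EuclideanSpace.norm_eq]
  simp_rw [Real.norm_eq_abs, sq_abs]
  gcongr
  simpa only [Finset.sum_pair hij] using
    Finset.sum_le_univ_sum_of_nonneg (s := {i, j}) (f := fun l => k l ^ 2) fun l => sq_nonneg _

lemma inv_sqrt_sq_add_sq_le {a b : ℝ} (ha : a ≠ 0) (hb : b ≠ 0) :
    (√(a ^ 2 + b ^ 2))⁻¹ ≤ |a| ^ (-(1 / 2) : ℝ) * |b| ^ (-(1 / 2) : ℝ) := by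
  have hab : 0 < |a| * |b| := by positivity
  rw [← mul_rpow (abs_nonneg a) (abs_nonneg b), rpow_neg hab.le, ← sqrt_eq_rpow]
  gcongr
  nlinarith [sq_nonneg (|a| - |b|), sq_abs a, sq_abs b]

lemma rpow_neg_half_mul_inv_sqrt_le_prod (k : E3) (hk : ∀ i, k i ≠ 0) :
    ‖k‖ ^ (-(1 / 2) : ℝ) * (√(k 0 ^ 2 + k 1 ^ 2))⁻¹ ≤ ∏ i, |k i| ^ (-(1 / 2) : ℝ) := by
  have h2 : ‖k‖ ^ (-(1 / 2) : ℝ) ≤ |k 2| ^ (-(1 / 2) : ℝ) :=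
    rpow_le_rpow_of_nonpos (abs_pos.2 (hk 2)) (PiLp.norm_apply_le k 2) (by norm_num)
  calc _ ≤ |k 2| ^ (-(1 / 2) : ℝ) * (|k 0| ^ (-(1 / 2) : ℝ) * |k 1| ^ (-(1 / 2) : ℝ)) :=
        mul_le_mul h2 (inv_sqrt_sq_add_sq_le (hk 0) (hk 1)) (by positivity) (by positivity)
    _ = _ := by rw [Fin.prod_univ_three]; ring

lemma rpow_neg_half_le_mul_prod {R : ℝ} (k : E3) (hk : ∀ i, k i ≠ 0) (hkR : ‖k‖ ≤ R) :
    ‖k‖ ^ (-(1 / 2) : ℝ) ≤ R * ∏ i, |k i| ^ (-(1 / 2) : ℝ) := by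
  have hk0 : 0 < ‖k‖ := (abs_pos.2 (hk 0)).trans_le (PiLp.norm_apply_le k 0)
  calc ‖k‖ ^ (-(1 / 2) : ℝ) = ‖k‖ * (‖k‖ ^ (-(1 / 2) : ℝ) * ‖k‖⁻¹) := by field_simp
    _ ≤ R * (‖k‖ ^ (-(1 / 2) : ℝ) * (√(k 0 ^ 2 + k 1 ^ 2))⁻¹) := by
        have hρ : 0 < √(k 0 ^ 2 + k 1 ^ 2) := by have := hk 0; positivity
        gcongr
        · exact hk0.le.trans hkR
        · exact EuclideanSpace.sqrt_sq_add_sq_le_norm k (i := 0) (j := 1) (by decide)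
    _ ≤ R * ∏ i, |k i| ^ (-(1 / 2) : ℝ) := by
        gcongr
        · exact hk0.le.trans hkR
        · exact rpow_neg_half_mul_inv_sqrt_le_prod k hk

def truncatedInvSqrtAbs (R : ℝ) : ℝ → ℝ :=
  (ball (0 : ℝ) R).indicator fun t => |t| ^ (-(1 / 2) : ℝ)

lemma truncatedInvSqrtAbs_nonneg (R t : ℝ) : 0 ≤ truncatedInvSqrtAbs R t :=
  indicator_nonneg (fun t _ => rpow_nonneg (abs_nonneg t) _) t

lemma measurable_truncatedInvSqrtAbs (R : ℝ) : Measurable (truncatedInvSqrtAbs R) :=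
  (measurable_abs.pow_const _).indicator measurableSet_ball

lemma memLp_truncatedInvSqrtAbs (R : ℝ) {p : ℝ} (hp : 0 < p) (hp2 : p < 2) :
    MemLp (truncatedInvSqrtAbs R) (ENNReal.ofReal p) :=
  memLp_indicator_ball_abs_rpow_neg hp (by linarith)

lemma norm_fderiv_mul_radial_le {E : Type*} [NormedAddCommGroup E] [InnerProductSpace ℝ E]
    {w : E → ℝ} (hw : ∀ x, |w x| ≤ 1) {ζ : ℝ → ℝ} {k : E} {ρ cw : ℝ} (hρ : 0 < ρ)
    (hρk : ρ ≤ ‖k‖) (hwk : ‖fderiv ℝ w k‖ ≤ cw / ρ) (hζ : DifferentiableAt ℝ ζ ‖k‖) :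
    ‖fderiv ℝ (fun x => w x * ζ ‖x‖ * ‖x‖ ^ (-(1 / 2) : ℝ)) k‖
      ≤ |ζ ‖k‖| * (|cw| + 1 / 2) * (‖k‖ ^ (-(1 / 2) : ℝ) * ρ⁻¹)
        + |deriv ζ ‖k‖| * ‖k‖ ^ (-(1 / 2) : ℝ) := by
  have hk : 0 < ‖k‖ := hρ.trans_le hρk
  have hk0 : k ≠ 0 := norm_pos_iff.1 hk
  set a := ‖k‖ ^ (-(1 / 2) : ℝ)
  have ha : 0 < a := rpow_pos_of_pos hk _
  set φ : ℝ → ℝ := fun r => ζ r * r ^ (-(1 / 2) : ℝ)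
  have hφ : DifferentiableAt ℝ φ ‖k‖ :=
    hζ.mul (differentiableAt_id.rpow_const (Or.inl hk.ne'))
  have hfun : (fun x => w x * ζ ‖x‖ * ‖x‖ ^ (-(1 / 2) : ℝ)) = fun x => w x * φ ‖x‖ := by
    ext x
    simp only [φ, mul_assoc]
  have hwk' : ‖fderiv ℝ w k‖ ≤ |cw| * ρ⁻¹ :=
    hwk.trans (div_le_div_of_nonneg_right (le_abs_self cw) hρ.le)
  have hpow : ‖k‖ ^ ((-(1 / 2) : ℝ) - 1) ≤ a * ρ⁻¹ := by
    rw [rpow_sub_one hk.ne', div_eq_mul_inv]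
    gcongr
  rw [hfun]
  calc _ ≤ |φ ‖k‖| * ‖fderiv ℝ w k‖ + ‖fderiv ℝ (fun x => φ ‖x‖) k‖ :=
        norm_fderiv_mul_le_of_abs_le_one hw (differentiableAt_comp_norm hφ hk0)
    _ = |ζ ‖k‖| * a * ‖fderiv ℝ w k‖ + |deriv φ ‖k‖| := by
        rw [norm_fderiv_comp_norm hφ hk0, abs_mul, abs_of_pos ha]
    _ ≤ |ζ ‖k‖| * a * (|cw| * ρ⁻¹)
          + (|deriv ζ ‖k‖| * a + |(-(1 / 2) : ℝ)| * |ζ ‖k‖| * (a * ρ⁻¹)) := by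
        gcongr
        exact (abs_deriv_mul_rpow_le hζ hk).trans (by gcongr)
    _ = _ := by
        rw [abs_of_neg (by norm_num : (-(1 / 2) : ℝ) < 0)]
        ring

lemma norm_fderiv_mul_radial_le_mul_prod {w : E3 → ℝ} (hw : ∀ k, |w k| ≤ 1) {cw : ℝ}
    (hw_grad : ∀ k : E3, (k 0) ^ 2 + (k 1) ^ 2 ≠ 0 →
      ‖fderiv ℝ w k‖ ≤ cw / Real.sqrt ((k 0) ^ 2 + (k 1) ^ 2))
    {ζ : ℝ → ℝ} (hζ : Differentiable ℝ ζ) {M M' R : ℝ} (hM : ∀ t, |ζ t| ≤ M)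
    (hM' : ∀ t, |deriv ζ t| ≤ M') (hR0 : 0 ≤ R) (hR : tsupport ζ ⊆ ball 0 R) {k : E3}
    (hk : ∀ i, k i ≠ 0) :
    ‖fderiv ℝ (fun x => w x * ζ ‖x‖ * ‖x‖ ^ (-(1 / 2) : ℝ)) k‖
      ≤ (M * (|cw| + 1 / 2) + M' * R) * ∏ i, truncatedInvSqrtAbs R (k i) := by
  have hsq : 0 < k 0 ^ 2 + k 1 ^ 2 := by have := hk 0; positivity
  have hbound := norm_fderiv_mul_radial_le hw (sqrt_pos.2 hsq)
    (EuclideanSpace.sqrt_sq_add_sq_le_norm k (i := 0) (j := 1) (by decide))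
    (hw_grad k hsq.ne') (hζ ‖k‖)
  have hM0 : 0 ≤ M := (abs_nonneg _).trans (hM 0)
  have hM'0 : 0 ≤ M' := (abs_nonneg _).trans (hM' 0)
  rcases lt_or_ge ‖k‖ R with hkR | hkR
  · have hprod : ∏ i, truncatedInvSqrtAbs R (k i) = ∏ i, |k i| ^ (-(1 / 2) : ℝ) :=
      Finset.prod_congr rfl fun i _ => indicator_of_mem
        (mem_ball_zero_iff.2 ((PiLp.norm_apply_le k i).trans_lt hkR)) _
    rw [hprod]
    refine hbound.trans ?_
    calc _ ≤ M * (|cw| + 1 / 2) * ∏ i, |k i| ^ (-(1 / 2) : ℝ)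
          + M' * (R * ∏ i, |k i| ^ (-(1 / 2) : ℝ)) := by
          gcongr
          exacts [hM _, rpow_neg_half_mul_inv_sqrt_le_prod k hk, hM' _,
            rpow_neg_half_le_mul_prod k hk hkR.le]
      _ = _ := by ring
  · have hζk : ζ =ᶠ[𝓝 ‖k‖] 0 := notMem_tsupport_iff_eventuallyEq.1 fun h => by
      simpa [mem_ball_zero_iff, not_lt.2 hkR] using hR h
    have hζ0 : ζ ‖k‖ = 0 := hζk.eq_of_nhds
    have hζ'0 : deriv ζ ‖k‖ = 0 := by simp [hζk.deriv_eq]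
    rw [hζ0, hζ'0, abs_zero, zero_mul, zero_mul, zero_mul, zero_add] at hbound
    exact hbound.trans (mul_nonneg (by positivity)
      (Finset.prod_nonneg fun i _ => truncatedInvSqrtAbs_nonneg R (k i)))

/-- The gradient of `k ↦ ε_{λ,i}(k) ζ(|k|) |k|^{-1/2}` lies in `L^{2−ε'}(ℝ³)` for any `ε' > 0`.
Here `w` is the `i`-th component of the polarization vector. -/
theorem gradient_in_L2_minus
    (w : E3 → ℝ) (hw_bd : ∀ k, |w k| ≤ 1)
    (cw : ℝ)
    (hw_grad : ∀ k : E3, (k 0) ^ 2 + (k 1) ^ 2 ≠ 0 →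
      ‖fderiv ℝ w k‖ ≤ cw / Real.sqrt ((k 0) ^ 2 + (k 1) ^ 2))
    (ζ : ℝ → ℝ) (hζ : ContDiff ℝ 1 ζ) (hζc : HasCompactSupport ζ) :
    ∀ ε' > (0 : ℝ),
      MemLp
        (fun k : E3 =>
          ‖fderiv ℝ (fun k' : E3 => w k' * ζ ‖k'‖ * ‖k'‖ ^ (-(1 / 2) : ℝ)) k‖)
        (ENNReal.ofReal (2 - ε')) := by
  intro ε' hε'
  have hF : AEStronglyMeasurable (fun k : E3 =>
      ‖fderiv ℝ (fun k' : E3 => w k' * ζ ‖k'‖ * ‖k'‖ ^ (-(1 / 2) : ℝ)) k‖) volume :=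
    (measurable_fderiv ℝ _).norm.aestronglyMeasurable
  rcases le_or_gt (2 - ε') 0 with hp | hp
  · rw [ENNReal.ofReal_eq_zero.2 hp]
    exact memLp_zero_iff_aestronglyMeasurable.2 hF
  obtain ⟨M, hM⟩ := hζ.continuous.bounded_above_of_compact_support hζc
  obtain ⟨M', hM'⟩ :=
    (hζ.continuous_deriv le_rfl).bounded_above_of_compact_support hζc.deriv
  obtain ⟨R, hR0, hR⟩ := hζc.isCompact.isBounded.subset_ball_lt 0 0
  have hg : MemLp (fun k : E3 => ∏ i, truncatedInvSqrtAbs R (k i)) (ENNReal.ofReal (2 - ε')) :=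
    memLp_euclideanSpace_prod_apply (measurable_truncatedInvSqrtAbs R) (by simpa using hp)
      ENNReal.ofReal_ne_top (memLp_truncatedInvSqrtAbs R hp (by linarith))
  refine (hg.const_mul (M * (|cw| + 1 / 2) + M' * R)).of_le hF ?_
  filter_upwards [EuclideanSpace.ae_forall_apply_ne 0] with k hk
  rw [norm_norm, Real.norm_eq_abs]
  exact (norm_fderiv_mul_radial_le_mul_prod hw_bd hw_grad (hζ.differentiable one_ne_zero)
    hM hM' hR0.le hR hk).trans (le_abs_self _)
end
end

section
/- (Localization error for P_f².) Let u, v be C² functions on ℝ^{3n} of the form u_n(Y) = u(‖Y‖_∞/R), v_n = √(1−u_n²), depending only on ‖Y‖_∞ = max_i |y_i|, with |Δ u_n|, |Δ v_n| ≤ c/R². Then for every ψ_n ∈ H¹ of the n-photon sector: ⟨P_f² (u_nψ_n), u_nψ_n⟩ + ⟨P_f² (v_nψ_n), v_nψ_n⟩ − ⟨P_f² ψ_n, ψ_n⟩ ≤ (cn/R²)‖ψ_n‖², where P_f² = Σ_{i,j} ∇_i·∇_j acts as (Σᵢ ∇_{y_i})². -/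
open MeasureTheory Real

noncomputable section

/-- The quadratic form of `P_f² = (−i Σᵢ ∇_{y_i})²` on the `n`-photon sector:
`⟨P_f²ψ, ψ⟩ = ∫ Σ_j ‖Σᵢ ∂_{y_i,j} ψ‖²`. -/
def pfSquaredForm (n : ℕ) (ψ : (Fin n → E3) → ℂ) : ℝ :=
  ∫ Y : Fin n → E3, ∑ j : Fin 3,
    ‖∑ i : Fin n, fderiv ℝ ψ Y (Pi.single i (EuclideanSpace.single j 1))‖ ^ 2

/-- The Laplacian `Σᵢ Δ_{y_i} f` of a function on the `n`-photon configuration space. -/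
def photonLaplacian (n : ℕ) (f : (Fin n → E3) → ℝ) (Y : Fin n → E3) : ℝ :=
  ∑ i : Fin n, ∑ j : Fin 3,
    fderiv ℝ (fun Z => fderiv ℝ f Z (Pi.single i (EuclideanSpace.single j 1))) Y
      (Pi.single i (EuclideanSpace.single j 1))


variable {E : Type*} [NormedAddCommGroup E] [NormedSpace ℝ E]

lemma fderiv_sq_apply (f : E → ℝ) (hf : Differentiable ℝ f) (Y v : E) :
    fderiv ℝ (fun W => f W ^ 2) Y v = 2 * f Y * fderiv ℝ f Y v := by
  have h := ((hf Y).hasFDerivAt.mul (hf Y).hasFDerivAt).fderiv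
  have : (fun W => f W ^ 2) = fun W => f W * f W := by ext W; ring
  rw [this, show (fun W => f W * f W) = f * f from rfl, h]
  simp; ring

lemma second_deriv_sq (f : E → ℝ) (hf : ContDiff ℝ 2 f) (e Y : E) :
    fderiv ℝ (fun Z => fderiv ℝ (fun W => f W ^ 2) Z e) Y e
    = 2 * (fderiv ℝ f Y e) ^ 2
      + 2 * f Y * fderiv ℝ (fun Z => fderiv ℝ f Z e) Y e := by
  have hd : Differentiable ℝ f := hf.differentiable (by simp)
  have hf' : ContDiff ℝ 1 (fderiv ℝ f) := (contDiff_succ_iff_fderiv.mp (by exact_mod_cast hf)).2.2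
  have hg : Differentiable ℝ (fun Z => fderiv ℝ f Z e) :=
    (hf'.differentiable (by simp)).clm_apply (differentiable_const e)
  have h1 : (fun Z => fderiv ℝ (fun W => f W ^ 2) Z e) = fun Z => 2 * f Z * fderiv ℝ f Z e := by
    ext Z; exact fderiv_sq_apply f hd Z e
  rw [h1]
  have h2 : HasFDerivAt (fun Z => 2 * f Z * fderiv ℝ f Z e)
      ((2 * f Y) • fderiv ℝ (fun Z => fderiv ℝ f Z e) Y
        + (fderiv ℝ f Y e) • ((2:ℝ) • fderiv ℝ f Y)) Y := by
    have := (((hd Y).hasFDerivAt.const_mul 2).fun_mul (hg Y).hasFDerivAt)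
    simpa using this
  rw [h2.fderiv]
  simp; ring

lemma second_deriv_add (f g : E → ℝ) (hf : ContDiff ℝ 2 f) (hg : ContDiff ℝ 2 g) (e Y : E) :
    fderiv ℝ (fun Z => fderiv ℝ (fun W => f W + g W) Z e) Y e
    = fderiv ℝ (fun Z => fderiv ℝ f Z e) Y e + fderiv ℝ (fun Z => fderiv ℝ g Z e) Y e := by
  have hdf : Differentiable ℝ f := hf.differentiable (by simp)
  have hdg : Differentiable ℝ g := hg.differentiable (by simp)
  have hf' : Differentiable ℝ (fun Z => fderiv ℝ f Z e) :=
    ((((contDiff_succ_iff_fderiv (n := 1)).mp (by exact_mod_cast hf)).2.2).differentiable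
      (by simp)).clm_apply (differentiable_const e)
  have hg' : Differentiable ℝ (fun Z => fderiv ℝ g Z e) :=
    ((((contDiff_succ_iff_fderiv (n := 1)).mp (by exact_mod_cast hg)).2.2).differentiable
      (by simp)).clm_apply (differentiable_const e)
  have h1 : (fun Z => fderiv ℝ (fun W => f W + g W) Z e)
      = fun Z => fderiv ℝ f Z e + fderiv ℝ g Z e := by
    ext Z; rw [fderiv_fun_add (hdf Z) (hdg Z)]; simp
  rw [h1, fderiv_fun_add (hf' Y) (hg' Y)]; simp

lemma fderiv_real_mul_complex (u : E → ℝ) (ψ : E → ℂ) (hu : Differentiable ℝ u)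
    (hψ : Differentiable ℝ ψ) (Y w : E) :
    fderiv ℝ (fun Z => (u Z : ℂ) * ψ Z) Y w
    = (u Y : ℂ) * fderiv ℝ ψ Y w + (fderiv ℝ u Y w : ℂ) * ψ Y := by
  have hC : fderiv ℝ (fun Z => (u Z : ℂ)) Y = Complex.ofRealCLM.comp (fderiv ℝ u Y) :=
    (Complex.ofRealCLM.hasFDerivAt.comp Y (hu Y).hasFDerivAt).fderiv
  have huC : Differentiable ℝ (fun Z => (u Z : ℂ)) :=
    Complex.ofRealCLM.differentiable.comp hu
  rw [show (fun Z => (u Z : ℂ) * ψ Z) = (fun Z => (u Z : ℂ)) * ψ from rfl,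
    fderiv_mul (huC Y) (hψ Y)]
  simp [hC, Complex.real_smul, smul_eq_mul]
  ring

lemma norm_expand (p q a b : ℝ) (A P : ℂ) (hpq : p ^ 2 + q ^ 2 = 1)
    (hab : p * a + q * b = 0) :
    ‖(p : ℂ) * A + (a : ℂ) * P‖ ^ 2 + ‖(q : ℂ) * A + (b : ℂ) * P‖ ^ 2
    = ‖A‖ ^ 2 + (a ^ 2 + b ^ 2) * ‖P‖ ^ 2 := by
  have key : ∀ z : ℂ, ‖z‖ ^ 2 = z.re ^ 2 + z.im ^ 2 := by
    intro z
    rw [Complex.sq_norm, Complex.normSq_apply]; ring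
  simp only [key, Complex.add_re, Complex.add_im, Complex.mul_re, Complex.mul_im,
    Complex.ofReal_re, Complex.ofReal_im]
  linear_combination (A.re ^ 2 + A.im ^ 2) * hpq + 2 * (A.re * P.re + A.im * P.im) * hab

lemma pointwise_bound (n : ℕ) (R c : ℝ) (hR : 0 < R) (hc : 0 ≤ c)
    (un vn : (Fin n → E3) → ℝ)
    (hu2 : ContDiff ℝ 2 un) (hv2 : ContDiff ℝ 2 vn)
    (hpart : ∀ Y, un Y ^ 2 + vn Y ^ 2 = 1)
    (hΔu : ∀ Y, |photonLaplacian n un Y| ≤ c / R ^ 2)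
    (hΔv : ∀ Y, |photonLaplacian n vn Y| ≤ c / R ^ 2)
    (ψ : (Fin n → E3) → ℂ) (hψd : Differentiable ℝ ψ) (Y : Fin n → E3) :
    (∑ j : Fin 3, ‖∑ i : Fin n,
        fderiv ℝ (fun Z => (un Z : ℂ) * ψ Z) Y (Pi.single i (EuclideanSpace.single j 1))‖ ^ 2)
    + (∑ j : Fin 3, ‖∑ i : Fin n,
        fderiv ℝ (fun Z => (vn Z : ℂ) * ψ Z) Y (Pi.single i (EuclideanSpace.single j 1))‖ ^ 2)
    - (∑ j : Fin 3, ‖∑ i : Fin n,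
        fderiv ℝ ψ Y (Pi.single i (EuclideanSpace.single j 1))‖ ^ 2)
    ≤ 2 * c * n / R ^ 2 * ‖ψ Y‖ ^ 2 := by
  classical
  have hdu : Differentiable ℝ un := hu2.differentiable (by simp)
  have hdv : Differentiable ℝ vn := hv2.differentiable (by simp)
  set P : Fin n → Fin 3 → (Fin n → E3) :=
    fun i j => Pi.single i (EuclideanSpace.single j 1) with hP
  set a : Fin n → Fin 3 → ℝ := fun i j => fderiv ℝ un Y (P i j) with ha
  set b : Fin n → Fin 3 → ℝ := fun i j => fderiv ℝ vn Y (P i j) with hb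
  set A : Fin 3 → ℂ := fun j => ∑ i : Fin n, fderiv ℝ ψ Y (P i j) with hA
  -- first-order constraint
  have hfo : ∀ v, un Y * fderiv ℝ un Y v + vn Y * fderiv ℝ vn Y v = 0 := by
    intro v
    have hconst : (fun Z => un Z ^ 2 + vn Z ^ 2) = fun _ => (1 : ℝ) := funext hpart
    have h0 : fderiv ℝ (fun Z => un Z ^ 2 + vn Z ^ 2) Y v = 0 := by
      rw [hconst]; simp
    rw [fderiv_fun_add ((hdu Y).fun_pow 2) ((hdv Y).fun_pow 2)] at h0
    simp only [ContinuousLinearMap.add_apply] at h0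
    rw [fderiv_sq_apply un hdu Y v, fderiv_sq_apply vn hdv Y v] at h0
    linarith
  -- rewrite product-rule sums
  have hsum_u : ∀ j, (∑ i : Fin n,
      fderiv ℝ (fun Z => (un Z : ℂ) * ψ Z) Y (P i j))
      = (un Y : ℂ) * A j + ((∑ i : Fin n, a i j : ℝ) : ℂ) * ψ Y := by
    intro j
    rw [Finset.sum_congr rfl (fun i _ => fderiv_real_mul_complex un ψ hdu hψd Y (P i j)),
      Finset.sum_add_distrib, ← Finset.mul_sum, ← Finset.sum_mul]
    push_cast
    rfl
  have hsum_v : ∀ j, (∑ i : Fin n,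
      fderiv ℝ (fun Z => (vn Z : ℂ) * ψ Z) Y (P i j))
      = (vn Y : ℂ) * A j + ((∑ i : Fin n, b i j : ℝ) : ℂ) * ψ Y := by
    intro j
    rw [Finset.sum_congr rfl (fun i _ => fderiv_real_mul_complex vn ψ hdv hψd Y (P i j)),
      Finset.sum_add_distrib, ← Finset.mul_sum, ← Finset.sum_mul]
    push_cast
    rfl
  -- pointwise identity
  have hiden : ∀ j : Fin 3,
      ‖(∑ i : Fin n, fderiv ℝ (fun Z => (un Z : ℂ) * ψ Z) Y (P i j))‖ ^ 2
      + ‖(∑ i : Fin n, fderiv ℝ (fun Z => (vn Z : ℂ) * ψ Z) Y (P i j))‖ ^ 2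
      = ‖A j‖ ^ 2 + ((∑ i : Fin n, a i j) ^ 2 + (∑ i : Fin n, b i j) ^ 2) * ‖ψ Y‖ ^ 2 := by
    intro j
    rw [hsum_u j, hsum_v j]
    refine norm_expand _ _ _ _ _ _ (hpart Y) ?_
    rw [Finset.mul_sum, Finset.mul_sum, ← Finset.sum_add_distrib]
    exact Finset.sum_eq_zero fun i _ => hfo (P i j)
  -- second-order identity
  have hso : (∑ i : Fin n, ∑ j : Fin 3, (a i j ^ 2 + b i j ^ 2))
      = -(un Y * photonLaplacian n un Y + vn Y * photonLaplacian n vn Y) := by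
    have key : ∀ (i : Fin n) (j : Fin 3),
        2 * (a i j ^ 2 + b i j ^ 2)
        + 2 * (un Y * fderiv ℝ (fun Z => fderiv ℝ un Z (P i j)) Y (P i j)
          + vn Y * fderiv ℝ (fun Z => fderiv ℝ vn Z (P i j)) Y (P i j)) = 0 := by
      intro i j
      have hconst : (fun Z => un Z ^ 2 + vn Z ^ 2) = fun _ => (1 : ℝ) := funext hpart
      have h0 : fderiv ℝ (fun Z =>
          fderiv ℝ (fun W => un W ^ 2 + vn W ^ 2) Z (P i j)) Y (P i j) = 0 := by
        rw [hconst]; simp [fderiv_const]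
      rw [second_deriv_add (fun W => un W ^ 2) (fun W => vn W ^ 2) (hu2.pow 2) (hv2.pow 2),
        second_deriv_sq un hu2, second_deriv_sq vn hv2] at h0
      simp only [ha, hb]
      linarith
    have := Finset.sum_congr rfl (fun i (_ : i ∈ Finset.univ) =>
      Finset.sum_congr rfl (fun j (_ : j ∈ Finset.univ) => key i j))
    simp only [Finset.sum_add_distrib, ← Finset.mul_sum, Finset.sum_const_zero] at this
    have hP' : ∀ (i : Fin n) (j : Fin 3),
        (Pi.single i (EuclideanSpace.single j 1) : Fin n → E3) = P i j := fun _ _ => rfl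
    simp only [photonLaplacian, hP', Finset.sum_add_distrib]
    linarith [this]
  -- Cauchy-Schwarz and final bound
  have hS : (∑ j : Fin 3, ((∑ i : Fin n, a i j) ^ 2 + (∑ i : Fin n, b i j) ^ 2))
      ≤ 2 * c * n / R ^ 2 := by
    have hcs : ∀ j : Fin 3, (∑ i : Fin n, a i j) ^ 2 + (∑ i : Fin n, b i j) ^ 2
        ≤ n * (∑ i : Fin n, (a i j ^ 2 + b i j ^ 2)) := by
      intro j
      have h1 := sq_sum_le_card_mul_sum_sq (s := Finset.univ) (f := fun i => a i j)
      have h2 := sq_sum_le_card_mul_sum_sq (s := Finset.univ) (f := fun i => b i j)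
      simp only [Finset.card_univ, Fintype.card_fin] at h1 h2
      rw [Finset.sum_add_distrib, mul_add]
      exact add_le_add h1 h2
    calc (∑ j : Fin 3, ((∑ i : Fin n, a i j) ^ 2 + (∑ i : Fin n, b i j) ^ 2))
        ≤ ∑ j : Fin 3, (n : ℝ) * (∑ i : Fin n, (a i j ^ 2 + b i j ^ 2)) :=
          Finset.sum_le_sum fun j _ => hcs j
      _ = (n : ℝ) * ∑ i : Fin n, ∑ j : Fin 3, (a i j ^ 2 + b i j ^ 2) := by
          rw [← Finset.mul_sum, Finset.sum_comm]
      _ ≤ (n : ℝ) * (2 * c / R ^ 2) := by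
          apply mul_le_mul_of_nonneg_left _ (Nat.cast_nonneg n)
          rw [hso]
          have hu1 : |un Y| ≤ 1 := by
            nlinarith [hpart Y, sq_nonneg (vn Y), sq_abs (un Y), abs_nonneg (un Y)]
          have hv1 : |vn Y| ≤ 1 := by
            nlinarith [hpart Y, sq_nonneg (un Y), sq_abs (vn Y), abs_nonneg (vn Y)]
          have h1 : -(un Y * photonLaplacian n un Y) ≤ c / R ^ 2 := by
            calc -(un Y * photonLaplacian n un Y) ≤ |un Y * photonLaplacian n un Y| :=
                neg_le_abs _
              _ = |un Y| * |photonLaplacian n un Y| := abs_mul _ _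
              _ ≤ 1 * (c / R ^ 2) := by
                  apply mul_le_mul hu1 (hΔu Y) (abs_nonneg _) zero_le_one
              _ = c / R ^ 2 := one_mul _
          have h2 : -(vn Y * photonLaplacian n vn Y) ≤ c / R ^ 2 := by
            calc -(vn Y * photonLaplacian n vn Y) ≤ |vn Y * photonLaplacian n vn Y| :=
                neg_le_abs _
              _ = |vn Y| * |photonLaplacian n vn Y| := abs_mul _ _
              _ ≤ 1 * (c / R ^ 2) := by
                  apply mul_le_mul hv1 (hΔv Y) (abs_nonneg _) zero_le_one
              _ = c / R ^ 2 := one_mul _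
          calc -(un Y * photonLaplacian n un Y + vn Y * photonLaplacian n vn Y)
              = -(un Y * photonLaplacian n un Y) + -(vn Y * photonLaplacian n vn Y) := by ring
            _ ≤ c / R ^ 2 + c / R ^ 2 := add_le_add h1 h2
            _ = 2 * c / R ^ 2 := by ring
      _ = 2 * c * n / R ^ 2 := by ring
  -- assemble
  have expand : (∑ j : Fin 3, ‖∑ i : Fin n,
        fderiv ℝ (fun Z => (un Z : ℂ) * ψ Z) Y (P i j)‖ ^ 2)
      + (∑ j : Fin 3, ‖∑ i : Fin n,
        fderiv ℝ (fun Z => (vn Z : ℂ) * ψ Z) Y (P i j)‖ ^ 2)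
      - (∑ j : Fin 3, ‖A j‖ ^ 2)
      = (∑ j : Fin 3, ((∑ i : Fin n, a i j) ^ 2 + (∑ i : Fin n, b i j) ^ 2)) * ‖ψ Y‖ ^ 2 := by
    rw [← Finset.sum_add_distrib, Finset.sum_congr rfl (fun j _ => hiden j),
      Finset.sum_add_distrib, ← Finset.sum_mul]
    ring
  rw [expand]
  exact mul_le_mul_of_nonneg_right hS (by positivity) |>.trans_eq rfl


lemma integrable_form (n : ℕ) (ψ φ : (Fin n → E3) → ℂ) (hψc : HasCompactSupport ψ)
    (hφ : ContDiff ℝ 2 φ) (h0 : ∀ Y, Y ∉ tsupport ψ → φ =ᶠ[nhds Y] 0) :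
    Integrable (fun Y => ∑ j : Fin 3,
      ‖∑ i : Fin n, fderiv ℝ φ Y (Pi.single i (EuclideanSpace.single j 1))‖ ^ 2) := by
  have hφ' : ContDiff ℝ 1 (fderiv ℝ φ) :=
    (contDiff_succ_iff_fderiv.mp (by exact_mod_cast hφ)).2.2
  have hcont : Continuous (fderiv ℝ φ) := hφ'.continuous
  apply Continuous.integrable_of_hasCompactSupport
  · apply continuous_finset_sum
    intro j _
    apply Continuous.pow
    apply Continuous.norm
    apply continuous_finset_sum
    intro i _
    exact (ContinuousLinearMap.apply ℝ ℂ
      ((Pi.single i (EuclideanSpace.single j 1) : Fin n → E3))).continuous.comp hcont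
  · apply HasCompactSupport.intro hψc
    intro Y hY
    have hz : fderiv ℝ φ Y = 0 := by
      rw [(h0 Y hY).fderiv_eq]
      exact fderiv_const_apply 0
    simp [hz]


theorem localization_error_pf_squared
    (n : ℕ) (R c : ℝ) (hR : 0 < R) (hc : 0 ≤ c)
    (u₀ : ℝ → ℝ) (un vn : (Fin n → E3) → ℝ)
    (hu2 : ContDiff ℝ 2 un) (hv2 : ContDiff ℝ 2 vn)
    (hform : ∀ Y : Fin n → E3, un Y = u₀ ((⨆ i, ‖Y i‖) / R))
    (hvform : ∀ Y : Fin n → E3, vn Y = Real.sqrt (1 - un Y ^ 2))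
    (hpart : ∀ Y, un Y ^ 2 + vn Y ^ 2 = 1)
    (hΔu : ∀ Y, |photonLaplacian n un Y| ≤ c / R ^ 2)
    (hΔv : ∀ Y, |photonLaplacian n vn Y| ≤ c / R ^ 2)
    (ψ : (Fin n → E3) → ℂ) (hψ : ContDiff ℝ (⊤ : ℕ∞) ψ) (hψc : HasCompactSupport ψ) :
    pfSquaredForm n (fun Y => (un Y : ℂ) * ψ Y)
      + pfSquaredForm n (fun Y => (vn Y : ℂ) * ψ Y)
      - pfSquaredForm n ψ
    ≤ 2 * c * n / R ^ 2 * ∫ Y : Fin n → E3, ‖ψ Y‖ ^ 2 := by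
  have hψ2 : ContDiff ℝ 2 ψ := hψ.of_le (WithTop.coe_le_coe.mpr (le_top : (2 : ℕ∞) ≤ ⊤))
  have hψd : Differentiable ℝ ψ := hψ2.differentiable (by simp)
  have h0ψ : ∀ Y, Y ∉ tsupport ψ → ψ =ᶠ[nhds Y] 0 := fun Y hY =>
    notMem_tsupport_iff_eventuallyEq.mp hY
  have h0u : ∀ Y, Y ∉ tsupport ψ → (fun Z => (un Z : ℂ) * ψ Z) =ᶠ[nhds Y] 0 := by
    intro Y hY
    filter_upwards [h0ψ Y hY] with Z hZ
    simp [hZ]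
  have h0v : ∀ Y, Y ∉ tsupport ψ → (fun Z => (vn Z : ℂ) * ψ Z) =ᶠ[nhds Y] 0 := by
    intro Y hY
    filter_upwards [h0ψ Y hY] with Z hZ
    simp [hZ]
  have huψ2 : ContDiff ℝ 2 (fun Z => (un Z : ℂ) * ψ Z) :=
    (Complex.ofRealCLM.contDiff.comp hu2).mul hψ2
  have hvψ2 : ContDiff ℝ 2 (fun Z => (vn Z : ℂ) * ψ Z) :=
    (Complex.ofRealCLM.contDiff.comp hv2).mul hψ2
  have hIu := integrable_form n ψ _ hψc huψ2 h0u
  have hIv := integrable_form n ψ _ hψc hvψ2 h0v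
  have hIψ := integrable_form n ψ ψ hψc hψ2 h0ψ
  have hIrhs : Integrable (fun Y : Fin n → E3 => 2 * c * ↑n / R ^ 2 * ‖ψ Y‖ ^ 2) := by
    apply Continuous.integrable_of_hasCompactSupport
    · exact continuous_const.mul (hψ.continuous.norm.pow 2)
    · apply HasCompactSupport.intro hψc
      intro Y hY
      simp [image_eq_zero_of_notMem_tsupport hY]
  have hIuv : Integrable (fun Y : Fin n → E3 =>
      (∑ j : Fin 3, ‖∑ i : Fin n,
        fderiv ℝ (fun Z => (un Z : ℂ) * ψ Z) Y (Pi.single i (EuclideanSpace.single j 1))‖ ^ 2)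
      + ∑ j : Fin 3, ‖∑ i : Fin n,
        fderiv ℝ (fun Z => (vn Z : ℂ) * ψ Z) Y (Pi.single i (EuclideanSpace.single j 1))‖ ^ 2) :=
    hIu.add hIv
  have hIall : Integrable (fun Y : Fin n → E3 =>
      ((∑ j : Fin 3, ‖∑ i : Fin n,
        fderiv ℝ (fun Z => (un Z : ℂ) * ψ Z) Y (Pi.single i (EuclideanSpace.single j 1))‖ ^ 2)
      + ∑ j : Fin 3, ‖∑ i : Fin n,
        fderiv ℝ (fun Z => (vn Z : ℂ) * ψ Z) Y (Pi.single i (EuclideanSpace.single j 1))‖ ^ 2)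
      - ∑ j : Fin 3, ‖∑ i : Fin n,
        fderiv ℝ ψ Y (Pi.single i (EuclideanSpace.single j 1))‖ ^ 2) :=
    hIuv.sub hIψ
  unfold pfSquaredForm
  rw [← integral_add hIu hIv, ← integral_sub hIuv hIψ, ← integral_const_mul]
  apply integral_mono hIall hIrhs
  intro Y
  exact pointwise_bound n R c hR hc un vn hu2 hv2 hpart hΔu hΔv ψ hψd Y
end
end
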